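/- arXiv:1404.7259 — 2 statements merged into one kernel-verified Lean document; each statement's English description precedes it below -/
import Mathlib

section
/- For every integer n ≥ 2, the chromatic number of the shift graph S(n) is at least log₂ n: any proper coloring of S(n) with c colors satisfies 2^c ≥ n. -/
/-- The shift graph `S(n)`: vertices are pairs `(i, j)` with `1 ≤ i < j ≤ n`,
and `(i, j)` is adjacent to `(k, l)` iff `j = k` or `l = i`. -/
def shiftGraph (n : ℕ) :
    SimpleGraph {p : ℕ × ℕ // 1 ≤ p.1 ∧ p.1 < p.2 ∧ p.2 ≤ n} where
  Adj p q := p.1.2 = q.1.1 ∨ q.1.2 = p.1.1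
  symm := by
    constructor
    rintro p q (h | h)
    · exact Or.inr h
    · exact Or.inl h
  loopless := by
    constructor
    rintro ⟨⟨i, j⟩, h1, h2, h3⟩ h
    simp only at h
    omega

/-! Give each `i` the set of colors of the edges `(i, j)`. For `i < j` these sets differ, because the
color of `(i, j)` is not the color of any `(j, k)`, an edge adjacent to `(i, j)`. So `i ↦` its set
is injective on `[1, n]`, and there are `2 ^ c` sets of colors. -/

namespace shiftGraph

variable {n : ℕ} {α : Type*} (χ : (shiftGraph n).Coloring α)

def outColors (i : ℕ) : Set α :=
  χ '' {p | p.1.1 = i}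

theorem outColors_ne_of_lt {i j : ℕ} (hi : 1 ≤ i) (hij : i < j) (hj : j ≤ n) :
    outColors χ i ≠ outColors χ j := by
  let p : {p : ℕ × ℕ // 1 ≤ p.1 ∧ p.1 < p.2 ∧ p.2 ≤ n} := ⟨(i, j), hi, hij, hj⟩
  have hp_mem : χ p ∈ outColors χ i := ⟨p, rfl, rfl⟩
  have hp_not_mem : χ p ∉ outColors χ j := by
    rintro ⟨q, hq, hqp⟩
    exact χ.valid (Or.inl hq.symm : (shiftGraph n).Adj p q) hqp.symm
  exact fun h => hp_not_mem (h ▸ hp_mem)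

theorem outColors_injOn : Set.InjOn (outColors χ) (Set.Icc 1 n) := by
  intro i hi j hj hij
  rcases lt_trichotomy i j with h | h | h
  · exact absurd hij (outColors_ne_of_lt χ hi.1 h hj.2)
  · exact h
  · exact absurd hij.symm (outColors_ne_of_lt χ hj.1 h hi.2)

end shiftGraph

theorem stmt_13_general (n c : ℕ)
    (χ : (shiftGraph n).Coloring (Fin c)) : n ≤ 2 ^ c := by
  classical
  have h := Finset.card_le_card_of_injOn (shiftGraph.outColors χ) (s := Finset.Icc 1 n)
    (t := Finset.univ) (fun _ _ => Finset.mem_univ _)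
    (by simpa using shiftGraph.outColors_injOn χ)
  simpa [Fintype.card_set] using h

theorem stmt_13 (n c : ℕ) (hn : 2 ≤ n)
    (χ : (shiftGraph n).Coloring (Fin c)) : n ≤ 2 ^ c :=
  stmt_13_general n c χ
end

section
/- Let F be a finite forest (acyclic simple graph) on n vertices, and suppose some linear ordering of its vertices causes the First-Fit greedy coloring to use k colors. Then n ≥ 2^{k-1}. Equivalently, the Grundy number of a forest on n vertices is at most ⌊log₂ n⌋ + 1. -/
/-- The First-Fit (greedy) coloring of a graph on `Fin n`, processing vertices in
the natural order: each vertex gets the smallest color (natural number) not used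
on any of its earlier neighbors. -/
noncomputable def firstFit {n : ℕ} (G : SimpleGraph (Fin n)) (v : Fin n) : ℕ :=
  sInf {c : ℕ | ∀ u : Fin n, (h : u < v) → G.Adj u v → firstFit G u ≠ c}
termination_by v.val
decreasing_by exact h

open Classical in
/-- Vertices reachable from `v` by a walk whose vertices all lie at or below `v`. -/
noncomputable def reachBelow {n : ℕ} (G : SimpleGraph (Fin n)) (v : Fin n) : Finset (Fin n) :=
  Finset.univ.filter (fun w => ∃ p : G.Walk v w, ∀ x ∈ p.support, x ≤ v)

lemma mem_reachBelow_iff {n : ℕ} (G : SimpleGraph (Fin n)) (v w : Fin n) :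
    w ∈ reachBelow G v ↔ ∃ p : G.Walk v w, ∀ x ∈ p.support, x ≤ v := by
  simp [reachBelow]

lemma le_of_mem_reachBelow {n : ℕ} {G : SimpleGraph (Fin n)} {v w : Fin n}
    (h : w ∈ reachBelow G v) : w ≤ v := by
  obtain ⟨p, hp⟩ := (mem_reachBelow_iff G v w).mp h
  exact hp w p.end_mem_support

lemma self_mem_reachBelow {n : ℕ} (G : SimpleGraph (Fin n)) (v : Fin n) :
    v ∈ reachBelow G v := by
  rw [mem_reachBelow_iff]
  exact ⟨SimpleGraph.Walk.nil, by simp⟩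

lemma reachBelow_subset {n : ℕ} {G : SimpleGraph (Fin n)} {u v : Fin n}
    (hlt : u < v) (hadj : G.Adj u v) : reachBelow G u ⊆ reachBelow G v := by
  intro w hw
  obtain ⟨p, hp⟩ := (mem_reachBelow_iff G u w).mp hw
  rw [mem_reachBelow_iff]
  refine ⟨SimpleGraph.Walk.cons hadj.symm p, ?_⟩
  intro x hx
  rw [SimpleGraph.Walk.support_cons, List.mem_cons] at hx
  rcases hx with rfl | hx
  · exact le_refl _
  · exact le_trans (hp x hx) hlt.le

lemma reachBelow_disjoint {n : ℕ} {G : SimpleGraph (Fin n)} (hG : G.IsAcyclic)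
    {u₁ u₂ v : Fin n} (hne : u₁ ≠ u₂) (h1 : u₁ < v) (h2 : u₂ < v)
    (ha1 : G.Adj u₁ v) (ha2 : G.Adj u₂ v) :
    Disjoint (reachBelow G u₁) (reachBelow G u₂) := by
  rw [Finset.disjoint_left]
  intro w hw1 hw2
  obtain ⟨p, hp⟩ := (mem_reachBelow_iff G u₁ w).mp hw1
  obtain ⟨q, hq⟩ := (mem_reachBelow_iff G u₂ w).mp hw2
  -- walk from u₁ to u₂ avoiding v
  set r : G.Walk u₁ u₂ := p.append q.reverse with hr
  have hrv : v ∉ r.support := by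
    intro hv
    rw [hr, SimpleGraph.Walk.mem_support_append_iff] at hv
    rcases hv with hv | hv
    · exact absurd (hp v hv) (not_le.mpr h1)
    · rw [SimpleGraph.Walk.support_reverse, List.mem_reverse] at hv
      exact absurd (hq v hv) (not_le.mpr h2)
  -- the path extracted from r avoids v
  have hP1 : v ∉ (↑r.toPath : G.Walk u₁ u₂).support := fun hv =>
    hrv (SimpleGraph.Walk.support_toPath_subset r hv)
  -- the path u₁ - v - u₂ contains v
  have hP2path : (SimpleGraph.Walk.cons ha1 (SimpleGraph.Walk.cons ha2.symm
      SimpleGraph.Walk.nil)).IsPath := by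
    rw [SimpleGraph.Walk.isPath_def]
    simp [SimpleGraph.Walk.support_cons]
    exact ⟨⟨h1.ne, hne⟩, h2.ne'⟩
  have := SimpleGraph.isAcyclic_iff_path_unique.mp hG r.toPath ⟨_, hP2path⟩
  apply hP1
  rw [this]
  simp [SimpleGraph.Walk.support_cons]

lemma sum_two_pow (c : ℕ) : 1 + ∑ j ∈ Finset.range c, 2 ^ j = 2 ^ c := by
  induction c with
  | zero => simp
  | succ c ih => rw [Finset.sum_range_succ, pow_succ]; omega

lemma firstFit_lower {n : ℕ} (G : SimpleGraph (Fin n)) (hG : G.IsAcyclic) (v : Fin n) :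
    2 ^ firstFit G v ≤ (reachBelow G v).card := by
  have heq : firstFit G v
      = sInf {c : ℕ | ∀ u : Fin n, (h : u < v) → G.Adj u v → firstFit G u ≠ c} := by
    rw [firstFit]
  have hwit : ∀ j : ℕ, ∃ u : Fin n,
      j < firstFit G v → u < v ∧ G.Adj u v ∧ firstFit G u = j := by
    intro j
    by_cases hj : j < firstFit G v
    · have hnm : j ∉ {c : ℕ | ∀ u : Fin n, (h : u < v) → G.Adj u v → firstFit G u ≠ c} :=
        Nat.notMem_of_lt_sInf (heq ▸ hj)
      simp only [Set.mem_setOf_eq, not_forall] at hnm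
      obtain ⟨u, hu1, hu2, hu3⟩ := hnm
      exact ⟨u, fun _ => ⟨hu1, hu2, of_not_not hu3⟩⟩
    · exact ⟨v, fun h => absurd h hj⟩
  choose u hu using hwit
  classical
  set B : Finset (Fin n) := (Finset.range (firstFit G v)).biUnion (fun j => reachBelow G (u j))
    with hB
  have hdisj : ∀ i ∈ Finset.range (firstFit G v), ∀ j ∈ Finset.range (firstFit G v),
      i ≠ j → Disjoint (reachBelow G (u i)) (reachBelow G (u j)) := by
    intro i hi j hj hij
    obtain ⟨hi1, hi2, hi3⟩ := hu i (Finset.mem_range.mp hi)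
    obtain ⟨hj1, hj2, hj3⟩ := hu j (Finset.mem_range.mp hj)
    have hune : u i ≠ u j := fun h => hij (by rw [← hi3, ← hj3, h])
    exact reachBelow_disjoint hG hune hi1 hj1 hi2 hj2
  have hcardB : B.card = ∑ j ∈ Finset.range (firstFit G v), (reachBelow G (u j)).card :=
    Finset.card_biUnion hdisj
  have hBsub : B ⊆ reachBelow G v := by
    intro w hw
    rw [hB, Finset.mem_biUnion] at hw
    obtain ⟨j, hj, hw⟩ := hw
    obtain ⟨hj1, hj2, _⟩ := hu j (Finset.mem_range.mp hj)
    exact reachBelow_subset hj1 hj2 hw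
  have hvB : v ∉ B := by
    intro hv
    rw [hB, Finset.mem_biUnion] at hv
    obtain ⟨j, hj, hv⟩ := hv
    obtain ⟨hj1, _, _⟩ := hu j (Finset.mem_range.mp hj)
    exact absurd (le_of_mem_reachBelow hv) (not_le.mpr hj1)
  have hins : insert v B ⊆ reachBelow G v := by
    intro w hw
    rcases Finset.mem_insert.mp hw with rfl | hw
    · exact self_mem_reachBelow G w
    · exact hBsub hw
  have hsum : ∑ j ∈ Finset.range (firstFit G v), 2 ^ j
      ≤ ∑ j ∈ Finset.range (firstFit G v), (reachBelow G (u j)).card := by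
    apply Finset.sum_le_sum
    intro j hj
    obtain ⟨hj1, _, hj3⟩ := hu j (Finset.mem_range.mp hj)
    calc 2 ^ j = 2 ^ firstFit G (u j) := by rw [hj3]
      _ ≤ (reachBelow G (u j)).card := firstFit_lower G hG (u j)
  calc 2 ^ firstFit G v = 1 + ∑ j ∈ Finset.range (firstFit G v), 2 ^ j :=
        (sum_two_pow _).symm
    _ ≤ 1 + B.card := by rw [hcardB]; omega
    _ = (insert v B).card := (Finset.card_insert_of_notMem hvB).symm ▸ by omega
    _ ≤ (reachBelow G v).card := Finset.card_le_card hins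
termination_by v.val
decreasing_by exact hj1

theorem stmt_15 (n k : ℕ) (hk : 1 ≤ k) (G : SimpleGraph (Fin n))
    (hforest : G.IsAcyclic)
    (hcolors : (Finset.univ.image (firstFit G)).card = k) :
    2 ^ (k - 1) ≤ n := by
  have hne : (Finset.univ.image (firstFit G)).Nonempty := by
    rw [← Finset.card_pos, hcolors]; omega
  have hne' : (Finset.univ : Finset (Fin n)).Nonempty := by
    obtain ⟨c, hc⟩ := hne
    obtain ⟨w, hw, _⟩ := Finset.mem_image.mp hc
    exact ⟨w, hw⟩
  obtain ⟨v, -, hv⟩ := Finset.exists_max_image Finset.univ (firstFit G) hne'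
  have hsub : Finset.univ.image (firstFit G) ⊆ Finset.range (firstFit G v + 1) := by
    intro c hc
    obtain ⟨w, _, rfl⟩ := Finset.mem_image.mp hc
    rw [Finset.mem_range]
    exact Nat.lt_succ_of_le (hv w (Finset.mem_univ w))
  have hkm : k ≤ firstFit G v + 1 := by
    calc k = (Finset.univ.image (firstFit G)).card := hcolors.symm
      _ ≤ (Finset.range (firstFit G v + 1)).card := Finset.card_le_card hsub
      _ = firstFit G v + 1 := Finset.card_range _
  calc 2 ^ (k - 1) ≤ 2 ^ firstFit G v := Nat.pow_le_pow_right (by norm_num) (by omega)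
    _ ≤ (reachBelow G v).card := firstFit_lower G hforest v
    _ ≤ (Finset.univ : Finset (Fin n)).card := Finset.card_le_univ _
    _ = n := by simp
end
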